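/- arXiv:2503.13412 — 5 statements merged into one kernel-verified Lean document; each statement's English description precedes it below -/
import Mathlib

section
/- Let Φ be a finite root system in a Euclidean space with a choice of positive roots Φ⁺, and let x be an elliptic element of the extended Weyl group W⋊⟨σ⟩ (i.e. x fixes no nonzero vector of ℝΦ). Then for every root α ∈ Φ⁺ (resp. α ∈ Φ⁻) there exists a positive integer i with xⁱ(α) ∈ Φ⁻ (resp. xⁱ(α) ∈ Φ⁺); in particular the quantity n_x(α) = min{ i ≥ 1 : xⁱ(α) lies in the opposite half of Φ } is well defined. -/
open scoped Pointwise

/-!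
The `x`-orbit of a root is finite, so some power `xⁿ` fixes it, and the orbit sum
`∑_{i<n} xⁱ α` is then an `x`-fixed vector of `span Φ`; by ellipticity it vanishes. Applying the
functional `f` that is positive on `Φ⁺`, the orbit cannot stay inside `Φ⁺`. The statement for
negative roots is the same statement for the positive system `Φ⁻`, cut out by `-f`.
-/

open Finset Set Submodule

section OrbitSum

variable {G A : Type*}

theorem exists_pow_smul_eq_self_of_mapsTo [Group G] [MulAction G A] {g : G} {s : Set A}
    (hs : s.Finite) (hg : MapsTo (g • ·) s s) {a : A} (ha : a ∈ s) :
    ∃ n, 1 ≤ n ∧ g ^ n • a = a := by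
  obtain ⟨i, j, hij, h⟩ := hs.exists_lt_map_eq_of_forall_mem (f := fun n : ℕ ↦ g ^ n • a)
    fun n ↦ smul_iterate_apply g n a ▸ hg.iterate n ha
  refine ⟨j - i, by omega, (smul_left_cancel_iff (g ^ i)).mp ?_⟩
  rw [smul_smul, ← pow_add, Nat.add_sub_cancel' hij.le]
  exact h.symm

theorem smul_sum_range_pow_smul [Monoid G] [AddCancelCommMonoid A] [DistribMulAction G A]
    {g : G} {a : A} {n : ℕ} (h : g ^ n • a = a) :
    g • ∑ i ∈ range n, g ^ i • a = ∑ i ∈ range n, g ^ i • a := by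
  refine add_right_cancel (b := a) ?_
  have hshift := sum_range_succ' (fun i ↦ g ^ i • a) n
  rw [sum_range_succ, h, pow_zero, one_smul] at hshift
  simpa only [smul_sum, smul_smul, ← pow_succ'] using hshift.symm

end OrbitSum

theorem Set.MapsTo.linearEquiv_pow {R M : Type*} [Semiring R] [AddCommMonoid M] [Module R M]
    {e : M ≃ₗ[R] M} {s : Set M} (h : MapsTo e s s) (n : ℕ) : MapsTo ⇑(e ^ n) s s :=
  LinearEquiv.coe_pow e n ▸ h.iterate n

section Elliptic

variable {K V : Type*} [Field K] [AddCommGroup V] [Module K V] {Φ : Set V} {x : V ≃ₗ[K] V}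

theorem exists_sum_range_pow_apply_eq_zero (hΦ : Φ.Finite) (hxΦ : MapsTo x Φ Φ)
    (hell : ∀ v ∈ span K Φ, x v = v → v = 0) {α : V} (hα : α ∈ Φ) :
    ∃ n, 1 ≤ n ∧ ∑ i ∈ range n, (x ^ i) α = 0 := by
  obtain ⟨n, hn, hper⟩ := exists_pow_smul_eq_self_of_mapsTo (g := x) hΦ hxΦ hα
  refine ⟨n, hn, hell _ (sum_mem fun i _ ↦ subset_span ?_) (smul_sum_range_pow_smul hper)⟩
  exact hxΦ.linearEquiv_pow i hα

theorem exists_pow_apply_notMem [LinearOrder K] [IsStrictOrderedRing K] {P : Set V}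
    (hΦ : Φ.Finite) (hPΦ : P ⊆ Φ) {f : V →ₗ[K] K} (hf : ∀ α ∈ P, 0 < f α)
    (hxΦ : MapsTo x Φ Φ) (hell : ∀ v ∈ span K Φ, x v = v → v = 0) {α : V} (hα : α ∈ P) :
    ∃ i, 1 ≤ i ∧ (x ^ i) α ∉ P := by
  obtain ⟨n, hn, hsum⟩ := exists_sum_range_pow_apply_eq_zero hΦ hxΦ hell (hPΦ hα)
  by_contra! hstay
  have hmem : ∀ i, (x ^ i) α ∈ P
    | 0 => hα
    | i + 1 => hstay (i + 1) (by omega)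
  have hpos : 0 < ∑ i ∈ range n, f ((x ^ i) α) :=
    sum_pos (fun i _ ↦ hf _ (hmem i)) (nonempty_range_iff.mpr (by omega))
  rw [← map_sum, hsum, map_zero] at hpos
  exact hpos.false

end Elliptic

theorem stmt_0_general
    {V : Type*} [AddCommGroup V] [Module ℝ V]
    (Φ Φpos : Set V) (hfin : Φ.Finite)
    (hsplit : Φ = Φpos ∪ -Φpos)
    (f : V →ₗ[ℝ] ℝ) (hf : ∀ α ∈ Φpos, 0 < f α)
    (x : V ≃ₗ[ℝ] V) (hxΦ : ∀ α ∈ Φ, x α ∈ Φ)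
    (hell : ∀ v ∈ Submodule.span ℝ Φ, x v = v → v = 0) :
    (∀ α ∈ Φpos, ∃ i : ℕ, 1 ≤ i ∧ (x ^ i) α ∈ -Φpos) ∧
      (∀ α ∈ -Φpos, ∃ i : ℕ, 1 ≤ i ∧ (x ^ i) α ∈ Φpos) := by
  have hmem : ∀ i, ∀ β ∈ Φ, (x ^ i) β ∈ Φpos ∪ -Φpos := fun i β hβ ↦
    hsplit ▸ MapsTo.linearEquiv_pow hxΦ i hβ
  refine ⟨fun α hα ↦ ?_, fun α hα ↦ ?_⟩
  · obtain ⟨i, hi, hout⟩ :=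
      exists_pow_apply_notMem hfin (hsplit ▸ subset_union_left) hf hxΦ hell hα
    exact ⟨i, hi, (hmem i α (hsplit ▸ Or.inl hα)).resolve_left hout⟩
  · have hf' : ∀ β ∈ -Φpos, 0 < (-f) β := fun β hβ ↦ by simpa using hf _ hβ
    obtain ⟨i, hi, hout⟩ :=
      exists_pow_apply_notMem hfin (hsplit ▸ subset_union_right) hf' hxΦ hell hα
    exact ⟨i, hi, (hmem i α (hsplit ▸ Or.inr hα)).resolve_right hout⟩

/-- For an elliptic element `x` of the extended Weyl group acting on a finite
root system `Φ = Φ⁺ ⊔ Φ⁻` (with `Φ⁻ = -Φ⁺` cut out by a linear functional `f` positive on `Φ⁺`),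
every positive root is eventually sent to a negative root by some positive power of `x`, and
vice versa; in particular `n_x(α)` is well defined. -/
theorem stmt_0
    {V : Type*} [AddCommGroup V] [Module ℝ V]
    (Φ Φpos : Set V) (hfin : Φ.Finite) (hpos : Φpos ⊆ Φ)
    (hsplit : Φ = Φpos ∪ -Φpos) (hdisj : Disjoint Φpos (-Φpos))
    (f : V →ₗ[ℝ] ℝ) (hf : ∀ α ∈ Φpos, 0 < f α)
    (x : V ≃ₗ[ℝ] V) (hxΦ : ∀ α ∈ Φ, x α ∈ Φ)
    (hell : ∀ v ∈ Submodule.span ℝ Φ, x v = v → v = 0) :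
    (∀ α ∈ Φpos, ∃ i : ℕ, 1 ≤ i ∧ (x ^ i) α ∈ -Φpos) ∧
      (∀ α ∈ -Φpos, ∃ i : ℕ, 1 ≤ i ∧ (x ^ i) α ∈ Φpos) :=
  stmt_0_general Φ Φpos hfin hsplit f hf x hxΦ hell
end

section
/- Let q be a prime power, let V be an 𝔽̄_q-vector space with a q-semilinear Frobenius F, and let W ⊆ V be an F^M-stable 𝔽_{q^M}-subspace in the sense that W = α∨ ⊗ 𝔽_{q^M} for a vector α∨ fixed by F^M. Then the image of W under the norm map Nm_M(v) = v + F(v) + ⋯ + F^{M−1}(v) is independent of the choice of M among positive integers with F^M fixing α∨: if F^M(α∨) = α∨ and M | M′, then Nm_M(α∨ ⊗ 𝔽_{q^M}) = Nm_{M′}(α∨ ⊗ 𝔽_{q^{M′}}). -/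
open Finset Polynomial

lemma exists_trace_root {K : Type*} [Field K] [IsAlgClosed K]
    (Q k : ℕ) (hQ : 1 < Q) (hk : 0 < k) (c : K) :
    ∃ c' : K, ∑ j ∈ Finset.range k, c' ^ Q ^ j = c := by
  obtain ⟨k, rfl⟩ := Nat.exists_eq_succ_of_ne_zero hk.ne'
  set g : K[X] := (∑ j ∈ Finset.range k, X ^ Q ^ j) - C c with hg
  have hdeg_g : g.degree < ((Q ^ k : ℕ) : WithBot ℕ) := by
    have h0 : (0 : WithBot ℕ) < ((Q ^ k : ℕ) : WithBot ℕ) := by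
      exact_mod_cast pow_pos (by omega : 0 < Q) k
    have h1 : (∑ j ∈ Finset.range k, (X : K[X]) ^ Q ^ j).degree < ((Q ^ k : ℕ) : WithBot ℕ) := by
      refine lt_of_le_of_lt (Polynomial.degree_sum_le _ _) ?_
      rw [Finset.sup_lt_iff (lt_of_le_of_lt bot_le h0)]
      intro j hj
      refine lt_of_le_of_lt (Polynomial.degree_X_pow_le _) ?_
      exact_mod_cast Nat.pow_lt_pow_right hQ (Finset.mem_range.mp hj)
    exact lt_of_le_of_lt (Polynomial.degree_sub_le _ _)
      (max_lt h1 (lt_of_le_of_lt Polynomial.degree_C_le h0))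
  set f : K[X] := X ^ Q ^ k + g with hf
  have hdeg_f : f.degree = ((Q ^ k : ℕ) : WithBot ℕ) := by
    rw [hf]
    rw [Polynomial.degree_add_eq_left_of_degree_lt (by rwa [Polynomial.degree_X_pow])]
    exact Polynomial.degree_X_pow _
  have hne : f.degree ≠ 0 := by
    rw [hdeg_f]
    exact_mod_cast (pow_pos (by omega : 0 < Q) k).ne'
  obtain ⟨c', hc'⟩ := IsAlgClosed.exists_root f hne
  refine ⟨c', ?_⟩
  have := hc'
  rw [Polynomial.IsRoot, hf, hg] at this
  simp only [Polynomial.eval_add, Polynomial.eval_sub, Polynomial.eval_pow,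
    Polynomial.eval_X, Polynomial.eval_C, Polynomial.eval_finset_sum] at this
  rw [Finset.sum_range_succ]
  linear_combination this



/-- Let `K` be an algebraically closed field of characteristic `p` and
`q = p^e`.  Let `V` be a `K`-vector space with an additive map `F` that is `q`-semilinear
(`F (c • v) = c^q • F v`), and let `α∨ ∈ V` be fixed by `F^M`.  Then the image of the
"slice" `α∨ ⊗ 𝔽_{q^M} = {c • α∨ : c^{q^M} = c}` under the norm map
`Nm_M(v) = v + F v + ⋯ + F^{M-1} v` does not change when `M` is replaced by a multiple `M'`:
`Nm_M(α∨ ⊗ 𝔽_{q^M}) = Nm_{M'}(α∨ ⊗ 𝔽_{q^{M'}})`. -/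
theorem stmt_5 {p : ℕ} [Fact p.Prime] (e : ℕ) (he : 0 < e)
    {K : Type*} [Field K] [IsAlgClosed K] [CharP K p]
    {V : Type*} [AddCommGroup V] [Module K V]
    (F : V →+ V) (hF : ∀ (c : K) (v : V), F (c • v) = c ^ (p ^ e) • F v)
    (α : V) (M M' : ℕ) (hM : 0 < M) (hM' : 0 < M') (hdvd : M ∣ M')
    (hfix : (⇑F)^[M] α = α) :
    (fun v => ∑ i ∈ Finset.range M, (⇑F)^[i] v) ''
        {v : V | ∃ c : K, c ^ p ^ (e * M) = c ∧ v = c • α} =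
      (fun v => ∑ i ∈ Finset.range M', (⇑F)^[i] v) ''
        {v : V | ∃ c : K, c ^ p ^ (e * M') = c ∧ v = c • α} := by
  obtain ⟨k, rfl⟩ := hdvd
  have hp : 1 < p := (Fact.out : p.Prime).one_lt
  have hk : 0 < k := by
    rcases Nat.eq_zero_or_pos k with h | h
    · subst h; simp at hM'
    · exact h
  set Q : ℕ := p ^ (e * M) with hQdef
  have hQ : 1 < Q := Nat.one_lt_pow (by positivity) hp
  have hexp : p ^ (e * (M * k)) = Q ^ k := by
    rw [hQdef, ← pow_mul, mul_assoc]
  -- iterated semilinearity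
  have hiter : ∀ (i : ℕ) (c : K) (v : V), (⇑F)^[i] (c • v) = c ^ p ^ (e * i) • (⇑F)^[i] v := by
    intro i
    induction i with
    | zero => intro c v; simp
    | succ i ih =>
      intro c v
      rw [Function.iterate_succ_apply', ih, hF, Function.iterate_succ_apply',
        ← pow_mul, ← pow_add, Nat.mul_succ]
  have hfixj : ∀ j : ℕ, (⇑F)^[M * j] α = α := by
    intro j
    rw [Function.iterate_mul]
    exact Function.iterate_fixed hfix j
  -- Frobenius power of the partial trace sums
  have hsum_pow : ∀ (z : K) (n : ℕ),
      (∑ j ∈ Finset.range n, z ^ Q ^ j) ^ Q = ∑ j ∈ Finset.range n, z ^ Q ^ (j + 1) := by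
    intro z n
    calc (∑ j ∈ Finset.range n, z ^ Q ^ j) ^ Q
        = iterateFrobenius K p (e * M) (∑ j ∈ Finset.range n, z ^ Q ^ j) := by
          rw [iterateFrobenius_def]
      _ = ∑ j ∈ Finset.range n, iterateFrobenius K p (e * M) (z ^ Q ^ j) := map_sum _ _ _
      _ = ∑ j ∈ Finset.range n, z ^ Q ^ (j + 1) := by
          refine Finset.sum_congr rfl fun j _ => ?_
          rw [iterateFrobenius_def, ← pow_mul, ← pow_succ]
  -- the key computation
  have key : ∀ (c : K) (n : ℕ),
      ∑ i ∈ Finset.range (M * n), (⇑F)^[i] (c • α)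
        = ∑ i ∈ Finset.range M, (⇑F)^[i] ((∑ j ∈ Finset.range n, c ^ Q ^ j) • α) := by
    intro c n
    induction n with
    | zero => simp
    | succ n ih =>
      rw [Nat.mul_succ, Finset.sum_range_add, ih, Finset.sum_range_succ]
      have h2 : ∀ i ∈ Finset.range M,
          (⇑F)^[M * n + i] (c • α) = (⇑F)^[i] ((c ^ Q ^ n) • α) := by
        intro i _
        have hs : (c ^ Q ^ n) ^ p ^ (e * i) = c ^ p ^ (e * (M * n + i)) := by
          rw [← pow_mul, hQdef, ← pow_mul, ← pow_add]
          congr 2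
          ring
        rw [hiter, hiter, hs, add_comm (M * n) i, Function.iterate_add_apply, hfixj]
      rw [Finset.sum_congr rfl h2, ← Finset.sum_add_distrib]
      refine Finset.sum_congr rfl fun i _ => ?_
      rw [add_smul, iterate_map_add]
  ext v
  simp only [Set.mem_image, Set.mem_setOf_eq]
  constructor
  · rintro ⟨w, ⟨c, hc, rfl⟩, rfl⟩
    obtain ⟨c', hc'⟩ := exists_trace_root Q k hQ hk c
    have hcQ : c ^ Q = c := hc
    have h1 : ∑ j ∈ Finset.range k, c' ^ Q ^ (j + 1) = c := by
      rw [← hsum_pow, hc', hcQ]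
    have e1 : ∑ j ∈ Finset.range (k + 1), c' ^ Q ^ j
        = (∑ j ∈ Finset.range k, c' ^ Q ^ (j + 1)) + c' ^ Q ^ 0 :=
      Finset.sum_range_succ' _ _
    have e2 : ∑ j ∈ Finset.range (k + 1), c' ^ Q ^ j
        = (∑ j ∈ Finset.range k, c' ^ Q ^ j) + c' ^ Q ^ k :=
      Finset.sum_range_succ _ _
    simp only [pow_zero, pow_one] at e1
    have hc'fix : c' ^ Q ^ k = c' := by linear_combination e1 - e2 + h1 - hc'
    refine ⟨c' • α, ⟨c', by rw [hexp]; exact hc'fix, rfl⟩, ?_⟩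
    show ∑ i ∈ Finset.range (M * k), (⇑F)^[i] (c' • α) = ∑ i ∈ Finset.range M, (⇑F)^[i] (c • α)
    rw [key c' k, hc']
  · rintro ⟨w, ⟨c, hc, rfl⟩, rfl⟩
    have hcQk : c ^ Q ^ k = c := by rw [← hexp]; exact hc
    set d : K := ∑ j ∈ Finset.range k, c ^ Q ^ j with hd
    have hsp := hsum_pow c k
    have e1 : ∑ j ∈ Finset.range (k + 1), c ^ Q ^ j
        = (∑ j ∈ Finset.range k, c ^ Q ^ (j + 1)) + c ^ Q ^ 0 :=
      Finset.sum_range_succ' _ _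
    have e2 : ∑ j ∈ Finset.range (k + 1), c ^ Q ^ j
        = (∑ j ∈ Finset.range k, c ^ Q ^ j) + c ^ Q ^ k :=
      Finset.sum_range_succ _ _
    simp only [pow_zero, pow_one] at e1
    have hdQ : d ^ Q = d := by
      rw [hd]
      linear_combination hsp + e2 - e1 + hcQk
    refine ⟨d • α, ⟨d, hdQ, rfl⟩, ?_⟩
    show ∑ i ∈ Finset.range M, (⇑F)^[i] (d • α) = ∑ i ∈ Finset.range (M * k), (⇑F)^[i] (c • α)
    rw [hd, ← key c k]
end

section
/- Let G be a reductive group (or just: let Φ be a crystallographic root system with Weyl-invariant inner product), let χ be a character of an abelian group receiving compatible maps χ_α from 𝔽_{q^N} for each α ∈ Φ as in the context, and define Φ_χ = {α ∈ Φ : χ_α is trivial}. Assume for all α, β ∈ Φ the length ratios n_{α,β} = (α,α)/(β,β) taking values 2^{±1} or 3^{±1} only occur when p is a torsion prime, and assume p is not a torsion prime (or p > 3). Then Φ_χ is closed under addition: if α, β ∈ Φ_χ and α + β ∈ Φ, then α + β ∈ Φ_χ. -/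
open scoped RealInnerProductSpace

/-! Writing `v∨ = (2/(v,v)) • v`, the coroot of `γ = α + β` is
`γ∨ = ((α,α)/(γ,γ)) α∨ + ((β,β)/(γ,γ)) β∨`. All squared-length ratios lie in
`{1, 2, 1/2, 3, 1/3}`, so multiplying by `6` gives an integral relation `6 γ∨ = a α∨ + b β∨`.
Hence `χ γ (6 t) = χ α (a t) χ β (b t) = 1`, and multiplication by `6` is onto `A` because
`p ∤ 6`. -/

section Coroot

variable {V : Type*} [NormedAddCommGroup V] [InnerProductSpace ℝ V]

noncomputable def coroot (v : V) : V := (2 / ⟪v, v⟫) • v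

theorem coroot_add {α β : V} (hα : ⟪α, α⟫ ≠ 0) (hβ : ⟪β, β⟫ ≠ 0) :
    coroot (α + β) =
      (⟪α, α⟫ / ⟪α + β, α + β⟫) • coroot α + (⟪β, β⟫ / ⟪α + β, α + β⟫) • coroot β := by
  simp only [coroot, smul_smul, smul_add]
  congr 2 <;> field_simp

end Coroot

theorem exists_int_eq_six_mul_of_mem {r : ℝ} (hr : r ∈ ({1, 2, 1/2, 3, 1/3} : Set ℝ)) :
    ∃ n : ℤ, (n : ℝ) = 6 * r := by
  rcases hr with rfl | rfl | rfl | rfl | rfl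
  exacts [⟨6, by norm_num⟩, ⟨12, by norm_num⟩, ⟨3, by norm_num⟩, ⟨18, by norm_num⟩,
    ⟨2, by norm_num⟩]

theorem Nat.Prime.isCoprime_six {p : ℕ} (hp : p.Prime) (hp2 : p ≠ 2) (hp3 : p ≠ 3) :
    IsCoprime (6 : ℤ) p := by
  have h2 : Nat.Coprime 2 p := (Nat.coprime_primes Nat.prime_two hp).mpr (Ne.symm hp2)
  have h3 : Nat.Coprime 3 p := (Nat.coprime_primes Nat.prime_three hp).mpr (Ne.symm hp3)
  exact Nat.isCoprime_iff_coprime.mpr (h2.mul_left h3)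

theorem stmt_6_general
    {V : Type*} [NormedAddCommGroup V] [InnerProductSpace ℝ V]
    (Φ : Set V)
    (p : ℕ) (hp : p.Prime) (hp2 : p ≠ 2) (hp3 : p ≠ 3)
    (hratio : ∀ α ∈ Φ, ∀ β ∈ Φ, ⟪α, α⟫ / ⟪β, β⟫ ∈ ({1, 2, 1/2, 3, 1/3} : Set ℝ))
    {A G : Type*} [AddCommGroup A] [CommGroup G]
    (hA : ∀ m : ℤ, IsCoprime m (p : ℤ) → Function.Surjective (fun t : A => m • t))
    (χ : V → A → G)
    (hrel : ∀ α ∈ Φ, ∀ β ∈ Φ, ∀ γ ∈ Φ, ∀ m a b : ℤ,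
      (m : ℝ) • ((2 / ⟪γ, γ⟫) • γ) =
          (a : ℝ) • ((2 / ⟪α, α⟫) • α) + (b : ℝ) • ((2 / ⟪β, β⟫) • β) →
      ∀ t : A, χ γ (m • t) = χ α (a • t) * χ β (b • t))
    (α β : V) (hα : α ∈ Φ) (hβ : β ∈ Φ) (hαβ : α + β ∈ Φ)
    (hχα : ∀ t, χ α t = 1) (hχβ : ∀ t, χ β t = 1) :
    ∀ t, χ (α + β) t = 1 := by
  -- `0` is not an admissible ratio, so no root has `(δ, δ) = 0`.
  have ratio_ne_zero : ∀ δ ∈ Φ, ∀ ε ∈ Φ, ⟪δ, δ⟫ / ⟪ε, ε⟫ ≠ 0 := fun δ hδ ε hε h => by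
    have := hratio δ hδ ε hε
    rw [h] at this
    norm_num at this
  have hα0 := (div_ne_zero_iff.mp (ratio_ne_zero α hα β hβ)).1
  have hβ0 := (div_ne_zero_iff.mp (ratio_ne_zero β hβ α hα)).1
  obtain ⟨a, ha⟩ := exists_int_eq_six_mul_of_mem (hratio α hα (α + β) hαβ)
  obtain ⟨b, hb⟩ := exists_int_eq_six_mul_of_mem (hratio β hβ (α + β) hαβ)
  have hrel6 : ((6 : ℤ) : ℝ) • coroot (α + β) = (a : ℝ) • coroot α + (b : ℝ) • coroot β := by
    rw [coroot_add hα0 hβ0, ha, hb, smul_add, smul_smul, smul_smul, Int.cast_ofNat]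
  intro s
  obtain ⟨t, rfl⟩ := hA 6 (hp.isCoprime_six hp2 hp3) s
  simp only [hrel α hα β hβ (α + β) hαβ 6 a b hrel6, hχα, hχβ, one_mul]

/-- Let `Φ` be a crystallographic root system in a real inner product space
in which all squared-length ratios lie in `{1, 2, 1/2, 3, 1/3}`, and let `p` be a prime
different from `2` and `3` (i.e. not a torsion prime).  Suppose given, for every `α ∈ Φ`, a
character `χ α : A → G` of an abelian group `A` on which multiplication by any integer prime
to `p` is surjective, subject to the compatibility: whenever `m·γ∨ = a·α∨ + b·β∨` holds among
coroots (`γ∨ = (2/(γ,γ))·γ`), one has `χ γ (m•t) = χ α (a•t) · χ β (b•t)` for all `t`.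
Then `Φ_χ = {α : χ α trivial}` is closed under addition: if `χ α` and `χ β` are trivial and
`α + β ∈ Φ`, then `χ (α+β)` is trivial. -/
theorem stmt_6
    {V : Type*} [NormedAddCommGroup V] [InnerProductSpace ℝ V]
    (Φ : Set V) (hfin : Φ.Finite) (h0 : (0 : V) ∉ Φ)
    (p : ℕ) (hp : p.Prime) (hp2 : p ≠ 2) (hp3 : p ≠ 3)
    (hratio : ∀ α ∈ Φ, ∀ β ∈ Φ, ⟪α, α⟫ / ⟪β, β⟫ ∈ ({1, 2, 1/2, 3, 1/3} : Set ℝ))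
    {A G : Type*} [AddCommGroup A] [CommGroup G]
    (hA : ∀ m : ℤ, IsCoprime m (p : ℤ) → Function.Surjective (fun t : A => m • t))
    (χ : V → A → G)
    (hhom : ∀ α ∈ Φ, ∀ s t : A, χ α (s + t) = χ α s * χ α t)
    (hrel : ∀ α ∈ Φ, ∀ β ∈ Φ, ∀ γ ∈ Φ, ∀ m a b : ℤ,
      (m : ℝ) • ((2 / ⟪γ, γ⟫) • γ) =
          (a : ℝ) • ((2 / ⟪α, α⟫) • α) + (b : ℝ) • ((2 / ⟪β, β⟫) • β) →
      ∀ t : A, χ γ (m • t) = χ α (a • t) * χ β (b • t))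
    (α β : V) (hα : α ∈ Φ) (hβ : β ∈ Φ) (hαβ : α + β ∈ Φ)
    (hχα : ∀ t, χ α t = 1) (hχβ : ∀ t, χ β t = 1) :
    ∀ t, χ (α + β) t = 1 :=
  stmt_6_general Φ p hp hp2 hp3 hratio hA χ hrel α β hα hβ hαβ hχα hχβ
end

section
/- Let O_L be a DVR with residue field λ and fraction field L, and let C be a bounded complex of finitely generated free O_L-modules such that dim_λ H^i(C ⊗ λ) = dim_L H^i(C ⊗ L) for all i. If moreover there is an integer s with H^i(C ⊗ L) = 0 for all i ≠ s, then H^i(C) = 0 for all i ≠ s and H^s(C) is a free O_L-module. -/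
open Function

noncomputable section

/-- Cohomology of a cochain complex `(C, d)` of `O`-modules at position `i`
(more precisely, in degree `i+1`): `ker (d (i+1)) / im (d i)`. -/
abbrev coh {O : Type*} [CommRing O] {C : ℤ → Type*} [∀ i, AddCommGroup (C i)]
    [∀ i, Module O (C i)] (d : ∀ i : ℤ, C i →ₗ[O] C (i + 1)) (i : ℤ) : Type _ :=
  LinearMap.ker (d (i + 1)) ⧸
    ((LinearMap.range (d i)).comap (LinearMap.ker (d (i + 1))).subtype)

/-- Cohomology of the base-changed complex `k ⊗_O C` as a `k`-module. -/
abbrev cohB {O : Type*} [CommRing O] (k : Type*) [CommRing k] [Algebra O k]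
    {C : ℤ → Type*} [∀ i, AddCommGroup (C i)] [∀ i, Module O (C i)]
    (d : ∀ i : ℤ, C i →ₗ[O] C (i + 1)) (i : ℤ) : Type _ :=
  letI : AddCommGroup (TensorProduct O k (C (i + 1 + 1))) := inferInstance
  letI : AddCommGroup (TensorProduct O k (C (i + 1))) := inferInstance
  LinearMap.ker ((d (i + 1)).baseChange k) ⧸
    ((LinearMap.range ((d i).baseChange k)).comap
      (LinearMap.ker ((d (i + 1)).baseChange k)).subtype)

/-!
Let `Bᵢ ⊆ Cᵢ₊₁` be the image of `dᵢ`, a free module. Since `L` is flat, `im (dᵢ ⊗ L) ≅ Bᵢ ⊗ L`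
has dimension `rank Bᵢ`. Counting dimensions in `C ⊗ F` gives
`hⁱ(C ⊗ F) + dim im (dᵢ ⊗ F) + dim im (dᵢ₊₁ ⊗ F) = rank Cᵢ₊₁` for `F = k, L`, so `hⁱ_k = hⁱ_L`
propagates `dim im (dᵢ ⊗ k) = dim im (dᵢ ⊗ L)` upwards from the degrees where `C` vanishes.
Thus `Bᵢ ⊗ k → Cᵢ₊₁ ⊗ k` is injective, which says that `π x ∈ Bᵢ` forces `x ∈ Bᵢ`, i.e.
`Cᵢ₊₁ / Bᵢ` is torsion-free. In degrees `i ≠ s` every cocycle becomes a coboundary over `L`, so a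
nonzero multiple of it is a coboundary, hence so is the cocycle itself; and `Hˢ(C) ⊆ Cₛ₊₁ / Bₛ` is
torsion-free and finitely generated over a PID, hence free.
-/

open TensorProduct Module

theorem LinearMap.range_baseChange {R A M N : Type*} [CommRing R] [CommRing A] [Algebra R A]
    [AddCommGroup M] [Module R M] [AddCommGroup N] [Module R N] (f : M →ₗ[R] N) :
    range (f.baseChange A) = (range f).baseChange A := by
  have hsurj : Surjective (f.rangeRestrict.baseChange A) :=
    lTensor_surjective A f.surjective_rangeRestrict
  rw [Submodule.baseChange, ← range_comp_of_range_eq_top _ (range_eq_top.mpr hsurj),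
    ← baseChange_comp]
  rfl

theorem IsDiscreteValuationRing.isTorsionFree_of_irreducible {R M : Type*} [CommRing R]
    [IsDomain R] [IsDiscreteValuationRing R] [AddCommGroup M] [Module R M] {π : R}
    (hπ : Irreducible π) (h : ∀ m : M, π • m = 0 → m = 0) : IsTorsionFree R M := by
  refine .of_smul_eq_zero fun r m hrm => or_iff_not_imp_left.mpr fun hr => ?_
  obtain ⟨n, u, rfl⟩ := eq_unit_mul_pow_irreducible hr hπ
  rw [mul_smul, ← Units.smul_def, smul_eq_zero_iff_eq] at hrm
  clear hr
  induction n generalizing m with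
  | zero => simpa using hrm
  | succ n ih => exact ih _ (h _ (by rwa [pow_succ', mul_smul] at hrm))

theorem Int.eq_of_add_succ_eq {a b : ℤ → ℕ} (i₀ : ℤ) (hle : ∀ i ≤ i₀, a i = b i)
    (hstep : ∀ i, a i + a (i + 1) = b i + b (i + 1)) : a = b := by
  funext i
  rcases le_total i i₀ with hi | hi
  · exact hle i hi
  · induction i, hi using Int.leInduction with
    | base => exact hle i₀ le_rfl
    | succ n _ ih => have := hstep n; omega

namespace Submodule

variable {R N : Type*} [CommRing R] [AddCommGroup N] [Module R N]

theorem exists_smul_mem_of_one_tmul_mem_baseChange {A : Type*} [CommRing A] [Algebra R A]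
    (S : Submonoid R) [IsLocalization S A] (P : Submodule R N) {y : N}
    (hy : (1 : A) ⊗ₜ[R] y ∈ P.baseChange A) : ∃ a ∈ S, a • y ∈ P := by
  have hP : P.baseChange A = P.localized' A S (TensorProduct.mk R A N 1) := by
    rw [baseChange_eq_span, localized'_eq_span, map_coe]
  rw [hP, mem_localized'] at hy
  obtain ⟨m, hm, s, hs⟩ := hy
  rw [IsLocalizedModule.mk'_eq_iff] at hs
  obtain ⟨c, hc⟩ := IsLocalizedModule.exists_of_eq (S := S)
    (hs.trans (map_smul (TensorProduct.mk R A N 1) (s : R) y).symm)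
  refine ⟨c * s, mul_mem c.2 s.2, ?_⟩
  rw [mul_smul, ← Submonoid.smul_def, ← hc]
  exact P.smul_mem _ hm

theorem injective_subtype_baseChange_iff {F : Type*} [Field F] [Algebra R F] [Nontrivial R]
    (P : Submodule R N) [Module.Free R P] [Module.Finite R P] :
    Injective (P.subtype.baseChange F) ↔ finrank F (P.baseChange F) = finrank R P := by
  have h := LinearMap.finrank_range_add_finrank_ker (P.subtype.baseChange F)
  rw [finrank_baseChange] at h
  rw [← LinearMap.ker_eq_bot, ← finrank_eq_zero, baseChange]
  omega

theorem mem_of_smul_mem_of_injective_subtype_baseChange [IsDomain R] [IsTorsionFree R N]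
    {A : Type*} [CommRing A] [Algebra R A] (P : Submodule R N) [Module.Free R P]
    [Module.Finite R P] (hP : Injective (P.subtype.baseChange A)) {π : R} (hπ : π ≠ 0)
    (hker : RingHom.ker (algebraMap R A) = Ideal.span {π}) {x : N} (hx : π • x ∈ P) :
    x ∈ P := by
  let y : P := ⟨π • x, hx⟩
  have hy : (1 : A) ⊗ₜ[R] y = 0 := hP <| by
    have hπA : algebraMap R A π = 0 := by
      rw [← RingHom.mem_ker, hker]; exact Ideal.mem_span_singleton_self π
    rw [LinearMap.baseChange_tmul, map_zero, subtype_apply, tmul_smul, ← algebraMap_smul A,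
      hπA, zero_smul]
  let b := Module.Free.chooseBasis R P
  have hdvd : ∀ j, π ∣ b.repr y j := fun j => by
    have := congr($((b.baseChange A).repr.congr_arg hy) j)
    rw [Basis.baseChange_repr_tmul, map_zero, Finsupp.zero_apply, Algebra.smul_def, mul_one,
      ← RingHom.mem_ker, hker] at this
    exact Ideal.mem_span_singleton.mp this
  choose e he using hdvd
  have hπx : π • x = π • ((∑ j, e j • b j : P) : N) := by
    rw [← coe_smul, Finset.smul_sum]
    simp_rw [smul_smul, ← he, b.sum_repr]
    rfl
  exact smul_right_injective N hπ hπx ▸ SetLike.coe_mem _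

theorem isTorsionFree_quotient_of_injective_subtype_baseChange [IsDomain R]
    [IsDiscreteValuationRing R] [IsTorsionFree R N] {A : Type*} [CommRing A] [Algebra R A]
    (P : Submodule R N) [Module.Free R P] [Module.Finite R P]
    (hP : Injective (P.subtype.baseChange A)) {π : R} (hπ : Irreducible π)
    (hker : RingHom.ker (algebraMap R A) = Ideal.span {π}) : IsTorsionFree R (N ⧸ P) :=
  IsDiscreteValuationRing.isTorsionFree_of_irreducible hπ fun m hm => by
    obtain ⟨x, rfl⟩ := Quotient.mk_surjective _ m
    rw [← Quotient.mk_smul, Quotient.mk_eq_zero] at hm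
    rw [Quotient.mk_eq_zero]
    exact P.mem_of_smul_mem_of_injective_subtype_baseChange hP hπ.ne_zero hker hm

theorem mem_of_smul_mem [IsDomain R] (P : Submodule R N) [IsTorsionFree R (N ⧸ P)] {a : R}
    (ha : a ≠ 0) {x : N} (hx : a • x ∈ P) : x ∈ P := by
  rw [← Quotient.mk_eq_zero, ← smul_eq_zero_iff_right ha, ← Quotient.mk_smul,
    Quotient.mk_eq_zero]
  exact hx

theorem subsingleton_quotient_comap_subtype_iff (K P : Submodule R N) :
    Subsingleton (K ⧸ P.comap K.subtype) ↔ K ≤ P := by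
  rw [Quotient.subsingleton_iff, comap_subtype_eq_top]

theorem isTorsionFree_quotient_comap_subtype [IsDomain R] (K P : Submodule R N)
    [IsTorsionFree R (N ⧸ P)] : IsTorsionFree R (K ⧸ P.comap K.subtype) := by
  refine .of_smul_eq_zero fun r q hrq => ?_
  obtain ⟨m, rfl⟩ := Quotient.mk_surjective _ q
  rw [← Quotient.mk_smul, Quotient.mk_eq_zero, mem_comap] at hrq
  have : r • (Quotient.mk (m : N) : N ⧸ P) = 0 := (Quotient.mk_eq_zero P).mpr hrq
  rw [Quotient.mk_eq_zero, mem_comap, subtype_apply]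
  rwa [smul_eq_zero, Quotient.mk_eq_zero] at this

theorem finrank_quotient_comap_subtype_add {F V W X : Type*} [Field F]
    [AddCommGroup V] [Module F V] [AddCommGroup W] [Module F W]
    [AddCommGroup X] [Module F X] [FiniteDimensional F W]
    (g : V →ₗ[F] W) (h : W →ₗ[F] X) (hgh : LinearMap.range g ≤ LinearMap.ker h) :
    finrank F (LinearMap.ker h ⧸ (LinearMap.range g).comap (LinearMap.ker h).subtype)
      + finrank F (LinearMap.range g) + finrank F (LinearMap.range h) = finrank F W := by
  have h1 := finrank_quotient_add_finrank ((LinearMap.range g).comap (LinearMap.ker h).subtype)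
  have h2 := (comapSubtypeEquivOfLe hgh).finrank_eq
  have h3 := LinearMap.finrank_range_add_finrank_ker h
  omega

end Submodule

section Complex

variable {O : Type*} [CommRing O] {C : ℤ → Type*} [∀ i, AddCommGroup (C i)]
  [∀ i, Module O (C i)] {d : ∀ i : ℤ, C i →ₗ[O] C (i + 1)}

theorem range_baseChange_le_ker_baseChange (A : Type*) [CommRing A] [Algebra O A]
    (hdd : ∀ i, (d (i + 1)).comp (d i) = 0) (i : ℤ) :
    LinearMap.range ((d i).baseChange A) ≤ LinearMap.ker ((d (i + 1)).baseChange A) := by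
  rw [LinearMap.range_le_ker_iff, ← LinearMap.baseChange_comp, hdd i, LinearMap.baseChange_zero]

variable [Nontrivial O] [∀ i, Module.Free O (C i)] [∀ i, Module.Finite O (C i)]

theorem finrank_cohB_add (F : Type*) [Field F] [Algebra O F]
    (hdd : ∀ i, (d (i + 1)).comp (d i) = 0) (i : ℤ) :
    finrank F (cohB F d i) + finrank F ((LinearMap.range (d i)).baseChange F)
      + finrank F ((LinearMap.range (d (i + 1))).baseChange F) = finrank O (C (i + 1)) := by
  rw [← LinearMap.range_baseChange, ← LinearMap.range_baseChange,
    ← finrank_baseChange (R := F) (S := O) (M' := C (i + 1))]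
  exact Submodule.finrank_quotient_comap_subtype_add _ _
    (range_baseChange_le_ker_baseChange F hdd i)

theorem finrank_baseChange_range_eq_of_finrank_cohB_eq (F F' : Type*) [Field F]
    [Algebra O F] [Field F'] [Algebra O F'] (hbdd : BddBelow {i : ℤ | Nontrivial (C i)})
    (hdd : ∀ i, (d (i + 1)).comp (d i) = 0)
    (hdim : ∀ i, finrank F (cohB F d i) = finrank F' (cohB F' d i)) (i : ℤ) :
    finrank F ((LinearMap.range (d i)).baseChange F)
      = finrank F' ((LinearMap.range (d i)).baseChange F') := by
  obtain ⟨i₀, hi₀⟩ := hbdd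
  refine congrFun (Int.eq_of_add_succ_eq
    (a := fun j => finrank F ((LinearMap.range (d j)).baseChange F))
    (b := fun j => finrank F' ((LinearMap.range (d j)).baseChange F')) (i₀ - 1)
    (fun j hj => ?_) fun j => ?_) i
  · have : Subsingleton (C j) := not_nontrivial_iff_subsingleton.mp fun h => by
      have := hi₀ h; omega
    rw [Subsingleton.elim (d j) 0, LinearMap.range_zero, Submodule.baseChange_bot,
      Submodule.baseChange_bot, finrank_bot, finrank_bot]
  · have := finrank_cohB_add F hdd j
    have := finrank_cohB_add F' hdd j
    have := hdim j
    omega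

end Complex

open Submodule LinearMap in
theorem stmt_8_general
    {O : Type*} [CommRing O] [IsDomain O] [IsDiscreteValuationRing O]
    (k : Type*) [Field k] [Algebra O k]
    (hloc : ∃ π : O, Irreducible π ∧ RingHom.ker (algebraMap O k) = Ideal.span {π})
    (L : Type*) [Field L] [Algebra O L] [IsFractionRing O L]
    (C : ℤ → Type) [∀ i, AddCommGroup (C i)] [∀ i, Module O (C i)]
    [∀ i, Module.Free O (C i)] [∀ i, Module.Finite O (C i)]
    (hbdd : {i : ℤ | Nontrivial (C i)}.Finite)
    (d : ∀ i : ℤ, C i →ₗ[O] C (i + 1))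
    (hdd : ∀ i, (d (i + 1)).comp (d i) = 0)
    (hdim : ∀ i : ℤ, Module.finrank k (cohB k d i) = Module.finrank L (cohB L d i))
    (s : ℤ) (hs : ∀ i : ℤ, i ≠ s → Subsingleton (cohB L d i)) :
    (∀ i : ℤ, i ≠ s → Subsingleton (coh d i)) ∧ Module.Free O (coh d s) := by
  obtain ⟨π, hπ, hker⟩ := hloc
  have : Module.Flat O L := IsLocalization.flat L (nonZeroDivisors O)
  have hrank_L (i : ℤ) : finrank L ((range (d i)).baseChange L) = finrank O (range (d i)) :=
    (injective_subtype_baseChange_iff _).mp <|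
      Module.Flat.lTensor_preserves_injective_linearMap _ (range (d i)).injective_subtype
  have hrank_k (i : ℤ) : finrank k ((range (d i)).baseChange k) = finrank O (range (d i)) :=
    (finrank_baseChange_range_eq_of_finrank_cohB_eq k L hbdd.bddBelow hdd hdim i).trans
      (hrank_L i)
  have htf (i : ℤ) : IsTorsionFree O (C (i + 1) ⧸ range (d i)) :=
    isTorsionFree_quotient_of_injective_subtype_baseChange _
      ((injective_subtype_baseChange_iff _).mpr (hrank_k i)) hπ hker
  refine ⟨fun i hi => (subsingleton_quotient_comap_subtype_iff _ _).mpr fun y hy => ?_, ?_⟩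
  · have hyL : (1 : L) ⊗ₜ[O] y ∈ (range (d i)).baseChange L := by
      rw [← LinearMap.range_baseChange]
      refine (subsingleton_quotient_comap_subtype_iff _ _).mp (hs i hi) ?_
      simp [LinearMap.mem_ker.mp hy]
    obtain ⟨a, ha, hay⟩ := exists_smul_mem_of_one_tmul_mem_baseChange (nonZeroDivisors O) _ hyL
    exact mem_of_smul_mem _ (nonZeroDivisors.ne_zero ha) hay
  · have := isTorsionFree_quotient_comap_subtype (ker (d (s + 1))) (range (d s))
    infer_instance

/-- Let `O` be a DVR with residue field `k` and fraction field `L`, and let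
`C` be a bounded complex of finite free `O`-modules such that
`dim_k H^i(C ⊗ k) = dim_L H^i(C ⊗ L)` for all `i`.  If there is an integer `s` with
`H^i(C ⊗ L) = 0` for all `i ≠ s`, then `H^i(C) = 0` for all `i ≠ s` and `H^s(C)` is a
free `O`-module. -/
theorem stmt_8
    {O : Type*} [CommRing O] [IsDomain O] [IsDiscreteValuationRing O]
    (k : Type*) [Field k] [Algebra O k]
    (hsurj : Surjective (algebraMap O k))
    (hloc : ∃ π : O, Irreducible π ∧ RingHom.ker (algebraMap O k) = Ideal.span {π})
    (L : Type*) [Field L] [Algebra O L] [IsFractionRing O L]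
    (C : ℤ → Type) [∀ i, AddCommGroup (C i)] [∀ i, Module O (C i)]
    [∀ i, Module.Free O (C i)] [∀ i, Module.Finite O (C i)]
    (hbdd : {i : ℤ | Nontrivial (C i)}.Finite)
    (d : ∀ i : ℤ, C i →ₗ[O] C (i + 1))
    (hdd : ∀ i, (d (i + 1)).comp (d i) = 0)
    (hdim : ∀ i : ℤ, Module.finrank k (cohB k d i) = Module.finrank L (cohB L d i))
    (s : ℤ) (hs : ∀ i : ℤ, i ≠ s → Subsingleton (cohB L d i)) :
    (∀ i : ℤ, i ≠ s → Subsingleton (coh d i)) ∧ Module.Free O (coh d s) :=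
  stmt_8_general k hloc L C hbdd d hdd hdim s hs
end
end

section
/- Let H be a finite group, N ⊴ H a normal subgroup, and let ρ, ρ′ be finite-dimensional irreducible representations of H over an algebraically closed field k such that the restrictions ρ|_N and ρ′|_N are isomorphic and irreducible as N-representations. Then there exists a one-dimensional character χ of H, trivial on N, with ρ′ ≅ ρ ⊗ χ. -/
/-!
Since `ρ|_N` is irreducible and `k` is algebraically closed, Schur's lemma makes every
`N`-intertwiner `V → V'` a scalar multiple of the given isomorphism `e`. Normality of `N` makes
`ρ' g⁻¹ ∘ e ∘ ρ g` an `N`-intertwiner for every `g : H`, so `H` acts on the line `k ∙ e`, and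
it does so through a character `χ`, trivial on `N` because `e` already intertwines there.
-/

open Module

section Intertwiners

variable {k G V V' : Type*} [Field k] [AddCommGroup V] [Module k V]
  [AddCommGroup V'] [Module k V']

theorem exists_eq_smul_one_of_commute [IsAlgClosed k] [FiniteDimensional k V] [Nontrivial V]
    [Monoid G] (ρ : Representation k G V) (S : Set G)
    (hirr : ∀ W : Submodule k V, (∀ g ∈ S, ∀ v ∈ W, ρ g v ∈ W) → W = ⊥ ∨ W = ⊤)
    (f : End k V) (hf : ∀ g ∈ S, Commute f (ρ g)) : ∃ c : k, f = c • 1 := by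
  obtain ⟨c, hc⟩ := End.exists_eigenvalue f
  have hinv : ∀ g ∈ S, ∀ v ∈ End.eigenspace f c, ρ g v ∈ End.eigenspace f c := by
    intro g hg v hv
    rw [End.mem_eigenspace_iff] at hv ⊢
    rw [← End.mul_apply, (hf g hg).eq, End.mul_apply, hv, map_smul]
  refine ⟨c, LinearMap.ext fun v => ?_⟩
  rcases hirr _ hinv with hbot | htop
  · exact absurd hbot hc
  · exact End.mem_eigenspace_iff.mp (htop ▸ Submodule.mem_top)

theorem exists_eq_smul_of_intertwines [IsAlgClosed k] [FiniteDimensional k V] [Nontrivial V]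
    [Monoid G] (ρ : Representation k G V) (ρ' : Representation k G V') (S : Set G)
    (hirr : ∀ W : Submodule k V, (∀ g ∈ S, ∀ v ∈ W, ρ g v ∈ W) → W = ⊥ ∨ W = ⊤)
    (e : V ≃ₗ[k] V') (he : ∀ g ∈ S, e ∘ₗ ρ g = ρ' g ∘ₗ e)
    (T : V →ₗ[k] V') (hT : ∀ g ∈ S, T ∘ₗ ρ g = ρ' g ∘ₗ T) : ∃ c : k, T = c • (e : V →ₗ[k] V') := by
  have hcomm : ∀ g ∈ S, Commute (e.symm ∘ₗ T) (ρ g) := by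
    intro g hg
    have he_symm : (e.symm : V' →ₗ[k] V) ∘ₗ ρ' g = ρ g ∘ₗ e.symm := by
      ext w
      apply e.injective
      simpa using (LinearMap.congr_fun (he g hg) (e.symm w)).symm
    change (e.symm ∘ₗ T) ∘ₗ ρ g = ρ g ∘ₗ (e.symm ∘ₗ T)
    rw [LinearMap.comp_assoc, hT g hg, ← LinearMap.comp_assoc, he_symm, LinearMap.comp_assoc]
  obtain ⟨c, hc⟩ := exists_eq_smul_one_of_commute ρ S hirr _ hcomm
  refine ⟨c, ?_⟩
  calc T = (e : V →ₗ[k] V') ∘ₗ ((e.symm : V' →ₗ[k] V) ∘ₗ T) := by ext; simp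
    _ = c • (e : V →ₗ[k] V') := by rw [hc, LinearMap.comp_smul, End.one_eq_id, LinearMap.comp_id]

theorem Representation.comp_eq_mul [Monoid G] (ρ : Representation k G V) (a b : G) :
    ρ a ∘ₗ ρ b = ρ (a * b) :=
  (map_mul ρ a b).symm

theorem intertwines_conj [Group G] (ρ : Representation k G V) (ρ' : Representation k G V')
    {N : Subgroup G} [N.Normal] {T : V →ₗ[k] V'} (hT : ∀ n ∈ N, T ∘ₗ ρ n = ρ' n ∘ₗ T) (g : G) :
    ∀ n ∈ N, (ρ' g⁻¹ ∘ₗ T ∘ₗ ρ g) ∘ₗ ρ n = ρ' n ∘ₗ (ρ' g⁻¹ ∘ₗ T ∘ₗ ρ g) := by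
  intro n hn
  have hconj : g * n * g⁻¹ ∈ N := Subgroup.Normal.conj_mem ‹_› n hn g
  calc (ρ' g⁻¹ ∘ₗ T ∘ₗ ρ g) ∘ₗ ρ n
      = ρ' g⁻¹ ∘ₗ (T ∘ₗ ρ (g * n * g⁻¹)) ∘ₗ ρ g := by
        rw [LinearMap.comp_assoc, LinearMap.comp_assoc, LinearMap.comp_assoc, ρ.comp_eq_mul,
          ρ.comp_eq_mul, inv_mul_cancel_right]
    _ = ρ' g⁻¹ ∘ₗ (ρ' (g * n * g⁻¹) ∘ₗ T) ∘ₗ ρ g := by rw [hT _ hconj]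
    _ = ρ' n ∘ₗ (ρ' g⁻¹ ∘ₗ T ∘ₗ ρ g) := by
        simp only [← LinearMap.comp_assoc, ρ'.comp_eq_mul, mul_assoc, inv_mul_cancel_left]

theorem exists_monoidHom_conj_eq_smul [Group G] (ρ : Representation k G V)
    (ρ' : Representation k G V') {e : V →ₗ[k] V'} (he : e ≠ 0)
    (h : ∀ g, ∃ c : k, ρ' g⁻¹ ∘ₗ e ∘ₗ ρ g = c • e) :
    ∃ χ : G →* k, ∀ g, ρ' g⁻¹ ∘ₗ e ∘ₗ ρ g = χ g • e := by
  choose c hc using h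
  have inj := smul_left_injective k he
  refine ⟨{ toFun := c, map_one' := inj ?_, map_mul' := fun g h => inj ?_ }, hc⟩
  · change c 1 • e = (1 : k) • e
    rw [← hc, one_smul]
    ext
    simp
  · calc c (g * h) • e = ρ' (g * h)⁻¹ ∘ₗ e ∘ₗ ρ (g * h) := (hc _).symm
      _ = ρ' h⁻¹ ∘ₗ (ρ' g⁻¹ ∘ₗ e ∘ₗ ρ g) ∘ₗ ρ h := by
        rw [mul_inv_rev, ← ρ.comp_eq_mul, ← ρ'.comp_eq_mul]
        simp only [LinearMap.comp_assoc]
      _ = (c g * c h) • e := by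
        rw [hc, LinearMap.smul_comp, LinearMap.comp_smul, hc, mul_smul]

end Intertwiners

theorem stmt_9_general {k : Type*} [Field k] [IsAlgClosed k]
    {H : Type*} [Group H] (N : Subgroup H) [N.Normal]
    {V V' : Type*} [AddCommGroup V] [Module k V] [AddCommGroup V'] [Module k V']
    [FiniteDimensional k V]
    (ρ : Representation k H V) (ρ' : Representation k H V')
    (hirr : Nontrivial V ∧
      ∀ W : Submodule k V, (∀ (g : H), ∀ v ∈ W, ρ g v ∈ W) → W = ⊥ ∨ W = ⊤)
    (hirrN : ∀ W : Submodule k V, (∀ g ∈ N, ∀ v ∈ W, ρ g v ∈ W) → W = ⊥ ∨ W = ⊤)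
    (hres : ∃ e : V ≃ₗ[k] V', ∀ g ∈ N, ∀ v : V, e (ρ g v) = ρ' g (e v)) :
    ∃ χ : H →* kˣ, (∀ g ∈ N, χ g = 1) ∧
      ∃ e : V ≃ₗ[k] V', ∀ (g : H) (v : V), e (ρ g v) = (χ g : k) • ρ' g (e v) := by
  obtain ⟨e, he⟩ := hres
  have : Nontrivial V := hirr.1
  have heN : ∀ n ∈ N, (e : V →ₗ[k] V') ∘ₗ ρ n = ρ' n ∘ₗ e := fun n hn => LinearMap.ext (he n hn)
  have he0 : (e : V →ₗ[k] V') ≠ 0 := by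
    obtain ⟨v, hv⟩ := exists_ne (0 : V)
    exact fun h => hv (e.injective (by simpa using LinearMap.congr_fun h v))
  obtain ⟨χ, hχ⟩ := exists_monoidHom_conj_eq_smul ρ ρ' he0 fun g =>
    exists_eq_smul_of_intertwines ρ ρ' N hirrN e heN _ (intertwines_conj ρ ρ' heN g)
  refine ⟨χ.toHomUnits, fun n hn => Units.ext (smul_left_injective k he0 ?_), e, fun g v => ?_⟩
  · change χ n • (e : V →ₗ[k] V') = (1 : k) • e
    rw [← hχ n, one_smul, heN n hn, ← LinearMap.comp_assoc, ρ'.comp_eq_mul, inv_mul_cancel,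
      map_one, End.one_eq_id, LinearMap.id_comp]
  · simpa [Representation.inv_apply_eq_iff] using LinearMap.congr_fun (hχ g) v

/-- Let `H` be a finite group, `N ⊴ H`, and let `ρ, ρ'` be
finite-dimensional irreducible representations of `H` over an algebraically closed field `k`
whose restrictions to `N` are isomorphic and irreducible.  Then there is a character
`χ : H →* kˣ`, trivial on `N`, with `ρ' ≅ ρ ⊗ χ`. -/
theorem stmt_9 {k : Type*} [Field k] [IsAlgClosed k]
    {H : Type*} [Group H] [Finite H] (N : Subgroup H) [N.Normal]
    {V V' : Type*} [AddCommGroup V] [Module k V] [AddCommGroup V'] [Module k V']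
    [FiniteDimensional k V] [FiniteDimensional k V']
    (ρ : Representation k H V) (ρ' : Representation k H V')
    (hirr : Nontrivial V ∧
      ∀ W : Submodule k V, (∀ (g : H), ∀ v ∈ W, ρ g v ∈ W) → W = ⊥ ∨ W = ⊤)
    (hirr' : Nontrivial V' ∧
      ∀ W : Submodule k V', (∀ (g : H), ∀ v ∈ W, ρ' g v ∈ W) → W = ⊥ ∨ W = ⊤)
    (hirrN : ∀ W : Submodule k V, (∀ g ∈ N, ∀ v ∈ W, ρ g v ∈ W) → W = ⊥ ∨ W = ⊤)
    (hirrN' : ∀ W : Submodule k V', (∀ g ∈ N, ∀ v ∈ W, ρ' g v ∈ W) → W = ⊥ ∨ W = ⊤)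
    (hres : ∃ e : V ≃ₗ[k] V', ∀ g ∈ N, ∀ v : V, e (ρ g v) = ρ' g (e v)) :
    ∃ χ : H →* kˣ, (∀ g ∈ N, χ g = 1) ∧
      ∃ e : V ≃ₗ[k] V', ∀ (g : H) (v : V), e (ρ g v) = (χ g : k) • ρ' g (e v) :=
  stmt_9_general N ρ ρ' hirr hirrN hres
end
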